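/- arXiv:2604.20724 — 2 statements merged into one kernel-verified Lean document; each statement's English description precedes it below -/
import Mathlib

section
/- For every bus k ∈ B, the total complex power injected from bus k into its incident branches equals the admittance-matrix form, i.e. Σ_{s ∈ S, from(s)=k} U(k)·conj(J_from(s)) + Σ_{s ∈ S, to(s)=k} U(k)·conj(J_to(s)) = U(k) · Σ_{i ∈ B} conj(Y(k,i)) · conj(U(i)). -/
/-!
Conjugating and multiplying by `U k`, the claim is the statement `I = Y U` that the current
injected at bus `k` is row `k` of the admittance matrix applied to the voltages. Each branch
current is linear in the voltages of its two endpoints, with the coefficients that the branch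
contributes to `Y`; grouping the branches at `k` by their other endpoint (which is never `k`)
turns the sum over branches into the sum over buses.
-/

open Finset ComplexConjugate

theorem Finset.sum_sum_filter_and_eq {S B M : Type*} [Fintype B] [DecidableEq B]
    [AddCommMonoid M] (t : Finset S) (p : S → Prop) [DecidablePred p] (g : S → B)
    (f : S → B → M) :
    ∑ i, ∑ s ∈ t.filter (fun s => p s ∧ g s = i), f s i = ∑ s ∈ t.filter p, f s (g s) := by
  simp_rw [← filter_filter]
  rw [← sum_fiberwise (t.filter p) g]
  refine sum_congr rfl fun i _ => sum_congr rfl fun s hs => ?_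
  rw [(mem_filter.mp hs).2]

theorem Finset.sum_sum_filter_and_eq' {S B M : Type*} [Fintype B] [DecidableEq B]
    [AddCommMonoid M] (t : Finset S) (p : S → Prop) [DecidablePred p] (g : S → B)
    (f : S → B → M) :
    ∑ i, ∑ s ∈ t.filter (fun s => g s = i ∧ p s), f s i = ∑ s ∈ t.filter p, f s (g s) := by
  simp_rw [and_comm (a := g _ = _)]
  exact sum_sum_filter_and_eq t p g f

section PowerNetwork

variable {B S : Type*} (fr toB : S → B) (Ys Yp n : S → ℂ) (U : B → ℂ)

theorem current_from_eq (s : S) :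
    Ys s * (U (fr s) - U (toB s) / n s) + Yp s / 2 * U (fr s)
      = (Ys s + Yp s / 2) * U (fr s) - Ys s / n s * U (toB s) := by
  ring

theorem current_to_eq (s : S) :
    1 / conj (n s) * (Ys s * (U (toB s) / n s - U (fr s)) + Yp s / 2 * (U (toB s) / n s))
      = (Ys s + Yp s / 2) / ((‖n s‖ : ℝ) : ℂ) ^ 2 * U (toB s)
        - Ys s / conj (n s) * U (fr s) := by
  rw [← Complex.mul_conj']
  ring

variable [Fintype S] [DecidableEq B] (Y : B → B → ℂ)

theorem admittance_row_eq (hdist : ∀ s, fr s ≠ toB s)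
    (hYoff : ∀ k i, k ≠ i → Y k i =
      -(∑ s ∈ univ.filter (fun s => fr s = k ∧ toB s = i), Ys s / n s)
      - ∑ s ∈ univ.filter (fun s => fr s = i ∧ toB s = k), Ys s / conj (n s))
    (k i : B) :
    Y k i = (if k = i then Y k k else 0)
      - ∑ s ∈ univ.filter (fun s => fr s = k ∧ toB s = i), Ys s / n s
      - ∑ s ∈ univ.filter (fun s => fr s = i ∧ toB s = k), Ys s / conj (n s) := by
  obtain rfl | hki := eq_or_ne k i
  · have no_loop : univ.filter (fun s => fr s = k ∧ toB s = k) = ∅ :=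
      filter_eq_empty_iff.mpr fun s _ hs => hdist s (hs.1.trans hs.2.symm)
    simp [no_loop]
  · rw [hYoff k i hki, if_neg hki]
    ring

theorem sum_admittance_mul_voltage [Fintype B] (hdist : ∀ s, fr s ≠ toB s)
    (hYoff : ∀ k i, k ≠ i → Y k i =
      -(∑ s ∈ univ.filter (fun s => fr s = k ∧ toB s = i), Ys s / n s)
      - ∑ s ∈ univ.filter (fun s => fr s = i ∧ toB s = k), Ys s / conj (n s))
    (hYdiag : ∀ k, Y k k =
      ∑ s ∈ univ.filter (fun s => fr s = k), (Ys s + Yp s / 2)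
      + ∑ s ∈ univ.filter (fun s => toB s = k),
          (Ys s + Yp s / 2) / ((‖n s‖ : ℝ) : ℂ) ^ 2)
    (k : B) :
    ∑ i, Y k i * U i
      = ∑ s ∈ univ.filter (fun s => fr s = k),
          ((Ys s + Yp s / 2) * U (fr s) - Ys s / n s * U (toB s))
        + ∑ s ∈ univ.filter (fun s => toB s = k),
          ((Ys s + Yp s / 2) / ((‖n s‖ : ℝ) : ℂ) ^ 2 * U (toB s)
            - Ys s / conj (n s) * U (fr s)) := by
  have row := admittance_row_eq fr toB Ys n Y hdist hYoff k
  rw [sum_congr rfl fun i _ => congrArg (· * U i) (row i)]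
  simp only [sub_mul, sum_sub_distrib, ite_mul, zero_mul, sum_ite_eq, mem_univ, if_true]
  simp_rw [sum_mul]
  rw [sum_sum_filter_and_eq univ (fun s => fr s = k) toB fun s i => Ys s / n s * U i,
    sum_sum_filter_and_eq' univ (fun s => toB s = k) fr fun s i => Ys s / conj (n s) * U i,
    hYdiag k, add_mul, sum_mul, sum_mul]
  have at_k (e : S → B) (c : S → ℂ) : ∑ s ∈ univ.filter (fun s => e s = k), c s * U k
      = ∑ s ∈ univ.filter (fun s => e s = k), c s * U (e s) :=
    sum_congr rfl fun s hs => by rw [(mem_filter.mp hs).2]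
  rw [at_k fr, at_k toB]
  ring

theorem sum_branch_currents_eq_sum_admittance_mul_voltage [Fintype B]
    (hdist : ∀ s, fr s ≠ toB s) (Jfrom Jto : S → ℂ)
    (hJfrom : ∀ s, Jfrom s =
      Ys s * (U (fr s) - U (toB s) / n s) + Yp s / 2 * U (fr s))
    (hJto : ∀ s, Jto s =
      1 / conj (n s) *
        (Ys s * (U (toB s) / n s - U (fr s)) + Yp s / 2 * (U (toB s) / n s)))
    (hYoff : ∀ k i, k ≠ i → Y k i =
      -(∑ s ∈ univ.filter (fun s => fr s = k ∧ toB s = i), Ys s / n s)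
      - ∑ s ∈ univ.filter (fun s => fr s = i ∧ toB s = k), Ys s / conj (n s))
    (hYdiag : ∀ k, Y k k =
      ∑ s ∈ univ.filter (fun s => fr s = k), (Ys s + Yp s / 2)
      + ∑ s ∈ univ.filter (fun s => toB s = k),
          (Ys s + Yp s / 2) / ((‖n s‖ : ℝ) : ℂ) ^ 2)
    (k : B) :
    ∑ s ∈ univ.filter (fun s => fr s = k), Jfrom s + ∑ s ∈ univ.filter (fun s => toB s = k), Jto s
      = ∑ i, Y k i * U i := by
  simp only [sum_admittance_mul_voltage fr toB Ys Yp n U Y hdist hYoff hYdiag, hJfrom, hJto,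
    current_from_eq, current_to_eq]

end PowerNetwork

theorem power_injection_admittance_form_general
    {B S : Type*} [Fintype B] [Fintype S] [DecidableEq B]
    (fr toB : S → B) (hdist : ∀ s, fr s ≠ toB s)
    (Ys Yp n : S → ℂ)
    (U : B → ℂ)
    (Jfrom Jto : S → ℂ)
    (hJfrom : ∀ s, Jfrom s =
      Ys s * (U (fr s) - U (toB s) / n s) + Yp s / 2 * U (fr s))
    (hJto : ∀ s, Jto s =
      (1 / (starRingEnd ℂ) (n s)) *
        (Ys s * (U (toB s) / n s - U (fr s)) + Yp s / 2 * (U (toB s) / n s)))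
    (Y : B → B → ℂ)
    (hYoff : ∀ k i, k ≠ i → Y k i =
      -(∑ s ∈ Finset.univ.filter (fun s => fr s = k ∧ toB s = i), Ys s / n s)
      - ∑ s ∈ Finset.univ.filter (fun s => fr s = i ∧ toB s = k),
          Ys s / (starRingEnd ℂ) (n s))
    (hYdiag : ∀ k, Y k k =
      ∑ s ∈ Finset.univ.filter (fun s => fr s = k), (Ys s + Yp s / 2)
      + ∑ s ∈ Finset.univ.filter (fun s => toB s = k),
          (Ys s + Yp s / 2) / ((‖n s‖ : ℝ) : ℂ) ^ 2)
    (k : B) :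
    (∑ s ∈ Finset.univ.filter (fun s => fr s = k), U k * (starRingEnd ℂ) (Jfrom s))
      + ∑ s ∈ Finset.univ.filter (fun s => toB s = k), U k * (starRingEnd ℂ) (Jto s)
    = U k * ∑ i, (starRingEnd ℂ) (Y k i) * (starRingEnd ℂ) (U i) := by
  have current := sum_branch_currents_eq_sum_admittance_mul_voltage fr toB Ys Yp n U Y hdist
    Jfrom Jto hJfrom hJto hYoff hYdiag k
  calc _ = U k * conj (∑ s ∈ univ.filter (fun s => fr s = k), Jfrom s
              + ∑ s ∈ univ.filter (fun s => toB s = k), Jto s) := by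
        rw [map_add, map_sum, map_sum, mul_add, mul_sum, mul_sum]
    _ = U k * ∑ i, conj (Y k i) * conj (U i) := by
        simp only [current, map_sum, map_mul]

/-- For every bus `k ∈ B`, the total complex power injected from bus `k`
into its incident branches equals the admittance-matrix form:
`Σ_{s, from(s)=k} U(k)·conj(J_from(s)) + Σ_{s, toB(s)=k} U(k)·conj(J_to(s))
  = U(k) · Σ_{i ∈ B} conj(Y(k,i)) · conj(U(i))`. -/
theorem power_injection_admittance_form
    {B S : Type*} [Fintype B] [Fintype S] [DecidableEq B]
    (fr toB : S → B) (hdist : ∀ s, fr s ≠ toB s)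
    (Ys Yp n : S → ℂ) (hn : ∀ s, n s ≠ 0)
    (U : B → ℂ)
    (Jfrom Jto : S → ℂ)
    (hJfrom : ∀ s, Jfrom s =
      Ys s * (U (fr s) - U (toB s) / n s) + Yp s / 2 * U (fr s))
    (hJto : ∀ s, Jto s =
      (1 / (starRingEnd ℂ) (n s)) *
        (Ys s * (U (toB s) / n s - U (fr s)) + Yp s / 2 * (U (toB s) / n s)))
    (Y : B → B → ℂ)
    (hYoff : ∀ k i, k ≠ i → Y k i =
      -(∑ s ∈ Finset.univ.filter (fun s => fr s = k ∧ toB s = i), Ys s / n s)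
      - ∑ s ∈ Finset.univ.filter (fun s => fr s = i ∧ toB s = k),
          Ys s / (starRingEnd ℂ) (n s))
    (hYdiag : ∀ k, Y k k =
      ∑ s ∈ Finset.univ.filter (fun s => fr s = k), (Ys s + Yp s / 2)
      + ∑ s ∈ Finset.univ.filter (fun s => toB s = k),
          (Ys s + Yp s / 2) / ((‖n s‖ : ℝ) : ℂ) ^ 2)
    (k : B) :
    (∑ s ∈ Finset.univ.filter (fun s => fr s = k), U k * (starRingEnd ℂ) (Jfrom s))
      + ∑ s ∈ Finset.univ.filter (fun s => toB s = k), U k * (starRingEnd ℂ) (Jto s)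
    = U k * ∑ i, (starRingEnd ℂ) (Y k i) * (starRingEnd ℂ) (U i) :=
  power_injection_admittance_form_general fr toB hdist Ys Yp n U Jfrom Jto hJfrom hJto Y hYoff
    hYdiag k
end

section
/- For every bus k ∈ B, the total complex current injected from bus k into its incident branches equals the admittance-matrix form, i.e. Σ_{s ∈ S, from(s)=k} J_from(s) + Σ_{s ∈ S, to(s)=k} J_to(s) = Σ_{i ∈ B} Y(k,i) · U(i). -/
/-!
Each Π-branch acts as a two-port: its two terminal currents are linear in the two end voltages,
`J_from = y_ff U(a) + y_ft U(b)` and `J_to = y_tf U(a) + y_tt U(b)`, with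
`y_ff = Y_S + Y_P/2`, `y_ft = -Y_S/n`, `y_tf = -Y_S/conj n`, `y_tt = (Y_S + Y_P/2)/|n|²`.
Summing over the branches at bus `k` and grouping by the far-end bus gives the `k`-th row of `Y`:
the self terms land on the diagonal, and since no branch is a loop, the coupling terms land
off the diagonal.
-/

open Finset

section Network

variable {R B S : Type*} [CommRing R] [Fintype S] [DecidableEq B]

theorem sum_sum_filter_and_eq_mul [Fintype B] (P : S → Prop) [DecidablePred P] (q : S → B)
    (w : S → R) (U : B → R) :
    ∑ i, (∑ s ∈ univ.filter (fun s => P s ∧ q s = i), w s) * U i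
      = ∑ s ∈ univ.filter P, w s * U (q s) := by
  rw [← sum_fiberwise (univ.filter P) q]
  refine sum_congr rfl fun i _ => ?_
  rw [filter_filter, sum_mul]
  exact sum_congr rfl fun s hs => by rw [(mem_filter.1 hs).2.2]

theorem sum_filter_eq_mul (p : S → B) (w : S → R) (U : B → R) (k : B) :
    (∑ s ∈ univ.filter (fun s => p s = k), w s) * U k
      = ∑ s ∈ univ.filter (fun s => p s = k), w s * U (p s) := by
  rw [sum_mul]
  exact sum_congr rfl fun s hs => by rw [(mem_filter.1 hs).2]

theorem sum_admittance_mul_eq_sum_branch_currents [Fintype B] (fr toB : S → B)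
    (hdist : ∀ s, fr s ≠ toB s) (yff yft ytf ytt : S → R) (U : B → R) (Y : B → B → R)
    (hYoff : ∀ k i, k ≠ i → Y k i =
      ∑ s ∈ univ.filter (fun s => fr s = k ∧ toB s = i), yft s
      + ∑ s ∈ univ.filter (fun s => fr s = i ∧ toB s = k), ytf s)
    (hYdiag : ∀ k, Y k k =
      ∑ s ∈ univ.filter (fun s => fr s = k), yff s
      + ∑ s ∈ univ.filter (fun s => toB s = k), ytt s)
    (k : B) :
    ∑ i, Y k i * U i
      = ∑ s ∈ univ.filter (fun s => fr s = k), (yff s * U (fr s) + yft s * U (toB s))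
        + ∑ s ∈ univ.filter (fun s => toB s = k), (ytf s * U (fr s) + ytt s * U (toB s)) := by
  have hloop : univ.filter (fun s => fr s = k ∧ toB s = k) = ∅ :=
    filter_eq_empty_iff.2 fun s _ h => hdist s (h.1.trans h.2.symm)
  -- With the diagonal split off as an indicator, the row sum can be taken term by term.
  have hY : ∀ i, Y k i =
      ∑ s ∈ univ.filter (fun s => fr s = k ∧ toB s = i), yft s
      + ∑ s ∈ univ.filter (fun s => toB s = k ∧ fr s = i), ytf s
      + if i = k then
          ∑ s ∈ univ.filter (fun s => fr s = k), yff s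
          + ∑ s ∈ univ.filter (fun s => toB s = k), ytt s
        else 0 := by
    intro i
    simp only [and_comm (a := toB _ = k)]
    rcases eq_or_ne i k with rfl | hik
    · simp [hloop, hYdiag]
    · rw [hYoff k i hik.symm, if_neg hik, add_zero]
  simp only [hY, add_mul, sum_add_distrib, ite_mul, zero_mul, sum_ite_eq', mem_univ, if_true,
    sum_sum_filter_and_eq_mul, sum_filter_eq_mul]
  ring

end Network

theorem pi_branch_from_current {K : Type*} [Field K] (Ys Yp n Ua Ub : K) :
    Ys * (Ua - Ub / n) + Yp / 2 * Ua = (Ys + Yp / 2) * Ua + -(Ys / n) * Ub := by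
  ring

theorem pi_branch_to_current (Ys Yp n Ua Ub : ℂ) :
    1 / (starRingEnd ℂ) n * (Ys * (Ub / n - Ua) + Yp / 2 * (Ub / n))
      = -(Ys / (starRingEnd ℂ) n) * Ua + (Ys + Yp / 2) / ((‖n‖ : ℝ) : ℂ) ^ 2 * Ub := by
  rw [← Complex.ofReal_pow, Complex.sq_norm, ← Complex.mul_conj]
  ring

theorem current_injection_admittance_form_general
    {B S : Type*} [Fintype B] [Fintype S] [DecidableEq B]
    (fr toB : S → B) (hdist : ∀ s, fr s ≠ toB s)
    (Ys Yp n : S → ℂ)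
    (U : B → ℂ)
    (Jfrom Jto : S → ℂ)
    (hJfrom : ∀ s, Jfrom s =
      Ys s * (U (fr s) - U (toB s) / n s) + Yp s / 2 * U (fr s))
    (hJto : ∀ s, Jto s =
      (1 / (starRingEnd ℂ) (n s)) *
        (Ys s * (U (toB s) / n s - U (fr s)) + Yp s / 2 * (U (toB s) / n s)))
    (Y : B → B → ℂ)
    (hYoff : ∀ k i, k ≠ i → Y k i =
      -(∑ s ∈ Finset.univ.filter (fun s => fr s = k ∧ toB s = i), Ys s / n s)
      - ∑ s ∈ Finset.univ.filter (fun s => fr s = i ∧ toB s = k),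
          Ys s / (starRingEnd ℂ) (n s))
    (hYdiag : ∀ k, Y k k =
      ∑ s ∈ Finset.univ.filter (fun s => fr s = k), (Ys s + Yp s / 2)
      + ∑ s ∈ Finset.univ.filter (fun s => toB s = k),
          (Ys s + Yp s / 2) / ((‖n s‖ : ℝ) : ℂ) ^ 2)
    (k : B) :
    (∑ s ∈ Finset.univ.filter (fun s => fr s = k), Jfrom s)
      + ∑ s ∈ Finset.univ.filter (fun s => toB s = k), Jto s
    = ∑ i, Y k i * U i := by
  have hYoff_add : ∀ k i, k ≠ i → Y k i =
      ∑ s ∈ univ.filter (fun s => fr s = k ∧ toB s = i), -(Ys s / n s)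
      + ∑ s ∈ univ.filter (fun s => fr s = i ∧ toB s = k),
          -(Ys s / (starRingEnd ℂ) (n s)) :=
    fun k i hki => by rw [hYoff k i hki, sub_eq_add_neg, sum_neg_distrib, sum_neg_distrib]
  simp only [hJfrom, hJto, pi_branch_from_current, pi_branch_to_current]
  exact (sum_admittance_mul_eq_sum_branch_currents fr toB hdist _ _ _ _ U Y hYoff_add hYdiag k).symm

/-- For every bus `k ∈ B`, the total complex current injected from bus `k`
into its incident branches equals the admittance-matrix form:
`Σ_{s, from(s)=k} J_from(s) + Σ_{s, toB(s)=k} J_to(s) = Σ_{i ∈ B} Y(k,i)·U(i)`. -/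
theorem current_injection_admittance_form
    {B S : Type*} [Fintype B] [Fintype S] [DecidableEq B]
    (fr toB : S → B) (hdist : ∀ s, fr s ≠ toB s)
    (Ys Yp n : S → ℂ) (hn : ∀ s, n s ≠ 0)
    (U : B → ℂ)
    (Jfrom Jto : S → ℂ)
    (hJfrom : ∀ s, Jfrom s =
      Ys s * (U (fr s) - U (toB s) / n s) + Yp s / 2 * U (fr s))
    (hJto : ∀ s, Jto s =
      (1 / (starRingEnd ℂ) (n s)) *
        (Ys s * (U (toB s) / n s - U (fr s)) + Yp s / 2 * (U (toB s) / n s)))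
    (Y : B → B → ℂ)
    (hYoff : ∀ k i, k ≠ i → Y k i =
      -(∑ s ∈ Finset.univ.filter (fun s => fr s = k ∧ toB s = i), Ys s / n s)
      - ∑ s ∈ Finset.univ.filter (fun s => fr s = i ∧ toB s = k),
          Ys s / (starRingEnd ℂ) (n s))
    (hYdiag : ∀ k, Y k k =
      ∑ s ∈ Finset.univ.filter (fun s => fr s = k), (Ys s + Yp s / 2)
      + ∑ s ∈ Finset.univ.filter (fun s => toB s = k),
          (Ys s + Yp s / 2) / ((‖n s‖ : ℝ) : ℂ) ^ 2)
    (k : B) :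
    (∑ s ∈ Finset.univ.filter (fun s => fr s = k), Jfrom s)
      + ∑ s ∈ Finset.univ.filter (fun s => toB s = k), Jto s
    = ∑ i, Y k i * U i :=
  current_injection_admittance_form_general fr toB hdist Ys Yp n U Jfrom Jto hJfrom hJto Y hYoff
    hYdiag k
end
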